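/- arXiv:0906.2729 — 3 statements merged into one kernel-verified Lean document; each statement's English description precedes it below -/
import Mathlib

section
/- Let L = (α_{kj})_{1≤k,j≤n} be an n×n integer matrix with det L ≠ 0, let a = (a₁,…,a_n) ∈ (ℂ*)ⁿ, and let f(z) = 1 + Σ_{k=1}^n a_k ∏_{j=1}^n z_j^{α_{kj}} (so the support of f is the vertex set of a simplex). Then the amoeba of V_f is solid: the complement ℝⁿ \ 𝒜_f has exactly n+1 connected components. (Lemma 3.3(i).) -/
/-!
The affine isomorphism `x ↦ L x + log |a|` turns the amoeba of `f` into the amoeba of the line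
`1 + w₁ + ⋯ + wₙ = 0`, i.e. the set of `y` for which `1, e^{y₁}, …, e^{yₙ}` are the side lengths
of a closed polygon in `ℂ`: none of them exceeds the sum of the others. The complement thus
splits into the `n + 1` open regions where one of these lengths dominates. They are pairwise
disjoint, and each is convex, since after dividing by the dominant length it is a sublevel set of
a sum of exponentials of linear forms.
-/

open Complex

section Components

open Function

variable {X ι : Type*} [TopologicalSpace X] {U : ι → Set X}

theorem connectedComponentIn_iUnion_eq_of_mem (hopen : ∀ i, IsOpen (U i))
    (hconn : ∀ i, IsPreconnected (U i)) (hdisj : Pairwise (Disjoint on U)) {i : ι} {x : X}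
    (hx : x ∈ U i) : connectedComponentIn (⋃ j, U j) x = U i := by
  refine subset_antisymm ?_ ((hconn i).subset_connectedComponentIn hx (Set.subset_iUnion U i))
  have hcover : ⋃ j, U j ⊆ U i ∪ ⋃ (j) (_ : j ≠ i), U j := by
    refine Set.iUnion_subset fun j => ?_
    rcases eq_or_ne j i with rfl | hji
    · exact Set.subset_union_left
    · exact (Set.subset_biUnion_of_mem (u := U) hji).trans Set.subset_union_right
  exact isPreconnected_connectedComponentIn.subset_left_of_subset_union (hopen i)
    (isOpen_biUnion fun j _ => hopen j)
    (Set.disjoint_iUnion₂_right.mpr fun j hji => hdisj (Ne.symm hji))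
    ((connectedComponentIn_subset _ x).trans hcover)
    ⟨x, mem_connectedComponentIn (Set.mem_iUnion_of_mem i hx), hx⟩

theorem ncard_connectedComponentIn_iUnion (hopen : ∀ i, IsOpen (U i))
    (hconn : ∀ i, IsConnected (U i)) (hdisj : Pairwise (Disjoint on U)) :
    {C | ∃ x ∈ ⋃ i, U i, C = connectedComponentIn (⋃ i, U i) x}.ncard = Nat.card ι := by
  have hcomp {i : ι} {x : X} (hx : x ∈ U i) : connectedComponentIn (⋃ j, U j) x = U i :=
    connectedComponentIn_iUnion_eq_of_mem hopen (fun j => (hconn j).isPreconnected) hdisj hx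
  have hrange : {C | ∃ x ∈ ⋃ i, U i, C = connectedComponentIn (⋃ i, U i) x} = Set.range U := by
    ext C
    constructor
    · rintro ⟨x, hx, rfl⟩
      obtain ⟨i, hi⟩ := Set.mem_iUnion.mp hx
      exact ⟨i, (hcomp hi).symm⟩
    · rintro ⟨i, rfl⟩
      obtain ⟨x, hx⟩ := (hconn i).nonempty
      exact ⟨x, Set.mem_iUnion_of_mem i hx, (hcomp hx).symm⟩
  rw [hrange, Set.ncard_range_of_injective]
  intro i j hij
  by_contra hne
  obtain ⟨x, hx⟩ := (hconn i).nonempty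
  exact Set.disjoint_left.mp (hdisj hne) hx (hij ▸ hx)

end Components

section Polygon

theorem two_mul_norm_le_norm_sum_add_sum_norm {E ι : Type*} [SeminormedAddCommGroup E]
    {s : Finset ι} (w : ι → E) {k : ι} (hk : k ∈ s) :
    2 * ‖w k‖ ≤ ‖∑ j ∈ s, w j‖ + ∑ j ∈ s, ‖w j‖ := by
  classical
  have hwk : w k = ∑ j ∈ s, w j - ∑ j ∈ s.erase k, w j := by
    rw [← Finset.add_sum_erase s w hk, add_sub_cancel_right]
  have hle : ‖w k‖ ≤ ‖∑ j ∈ s, w j‖ + ∑ j ∈ s.erase k, ‖w j‖ := by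
    calc ‖w k‖ ≤ ‖∑ j ∈ s, w j‖ + ‖∑ j ∈ s.erase k, w j‖ := hwk ▸ norm_sub_le _ _
      _ ≤ _ := by gcongr; exact norm_sum_le _ _
  linarith [Finset.add_sum_erase s (fun j => ‖w j‖) hk]

variable {E : Type*} [NormedAddCommGroup E] [NormedSpace ℝ E]

theorem exists_norm_eq_one_and_eq_norm_smul (hE : 1 < Module.rank ℝ E) (x : E) :
    ∃ u : E, ‖u‖ = 1 ∧ x = ‖x‖ • u := by
  by_cases hx : x = 0
  · have : Nontrivial E := rank_pos_iff_nontrivial.mp (zero_lt_one.trans hE)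
    obtain ⟨u, hu⟩ := exists_norm_eq E zero_le_one
    exact ⟨u, hu, by simp [hx]⟩
  · refine ⟨‖x‖⁻¹ • x, by simp [norm_smul, hx], ?_⟩
    rw [smul_smul, mul_inv_cancel₀ (norm_ne_zero_iff.mpr hx), one_smul]

/-- Intermediate value theorem for `w ↦ ‖x + w‖` on the sphere of radius `ρ`, which is connected
in dimension at least two. -/
theorem exists_norm_eq_and_norm_add_eq (hE : 1 < Module.rank ℝ E) (x : E) {ρ t : ℝ}
    (hρ : 0 ≤ ρ) (ht₁ : |‖x‖ - ρ| ≤ t) (ht₂ : t ≤ ‖x‖ + ρ) :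
    ∃ w : E, ‖w‖ = ρ ∧ ‖x + w‖ = t := by
  obtain ⟨u, hu, hxu⟩ := exists_norm_eq_one_and_eq_norm_smul hE x
  have hnorm (c : ℝ) : ‖x + c • u‖ = |‖x‖ + c| := by
    rw [hxu, ← add_smul, norm_smul, hu, mul_one, Real.norm_eq_abs, norm_smul, Real.norm_eq_abs,
      abs_norm, hu, mul_one]
  have hsphere (c : ℝ) (hc : |c| = ρ) : c • u ∈ Metric.sphere (0 : E) ρ := by
    simp [norm_smul, hu, hc]
  have hcont : Continuous fun w : E => ‖x + w‖ := by fun_prop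
  obtain ⟨w, hw, hwt⟩ := (isPreconnected_sphere hE 0 ρ).intermediate_value
    (hsphere (-ρ) (by simp [abs_of_nonneg hρ])) (hsphere ρ (abs_of_nonneg hρ)) hcont.continuousOn
    (show t ∈ Set.Icc _ _ from ⟨by rwa [hnorm, ← sub_eq_add_neg], by
      rwa [hnorm, abs_of_nonneg (add_nonneg (norm_nonneg x) hρ)]⟩)
  exact ⟨w, mem_sphere_zero_iff_norm.mp hw, hwt⟩

theorem exists_norm_eq_and_norm_sum_eq (hE : 1 < Module.rank ℝ E) {m : ℕ} (r : Fin m → ℝ)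
    (hr : ∀ k, 0 ≤ r k) {c : ℝ} (hc₀ : 0 ≤ c) (hc : c ≤ ∑ k, r k)
    (hrc : ∀ k, 2 * r k ≤ c + ∑ j, r j) :
    ∃ w : Fin m → E, (∀ k, ‖w k‖ = r k) ∧ ‖∑ k, w k‖ = c := by
  induction m generalizing c with
  | zero => exact ⟨Fin.elim0, fun k => k.elim0, by simp_all [le_antisymm hc hc₀]⟩
  | succ m ih =>
    set r' : Fin m → ℝ := fun k => r k.castSucc
    set ρ := r (Fin.last m)
    have hsum : ∑ k, r k = ∑ k, r' k + ρ := Fin.sum_univ_castSucc r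
    have hr'₀ : 0 ≤ ∑ k, r' k := Finset.sum_nonneg fun k _ => hr _
    have hr'_le (k : Fin m) : r' k ≤ ∑ j, r' j :=
      Finset.single_le_sum (fun j _ => hr j.castSucc) (Finset.mem_univ k)
    have hρ := hrc (Fin.last m)
    have hrc' (k : Fin m) := hrc k.castSucc
    rw [hsum] at hc hρ hrc'
    -- the first `m` sides close up to a side of length `c'`, which then forms a triangle
    -- with `c` and `ρ`
    set c' := min (∑ k, r' k) (c + ρ)
    have hc'₁ : c' ≤ ∑ k, r' k := min_le_left _ _
    have hc'₂ : c' ≤ c + ρ := min_le_right _ _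
    have hc'₃ : c' = ∑ k, r' k ∨ c' = c + ρ := min_choice _ _
    obtain ⟨w', hw', hw'c⟩ := ih r' (fun k => hr _) (le_min hr'₀ (by linarith [hr (Fin.last m)]))
      hc'₁ fun k => by rcases hc'₃ with h | h <;> linarith [hr'_le k, hrc' k]
    obtain ⟨w, hw, hwc⟩ := exists_norm_eq_and_norm_add_eq hE (∑ k, w' k) (hr (Fin.last m))
      (t := c) (by rw [hw'c, abs_le]; constructor <;> rcases hc'₃ with h | h <;> linarith)
      (by rw [hw'c]; rcases hc'₃ with h | h <;> linarith [hr (Fin.last m)])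
    refine ⟨Fin.snoc w' w, fun k => ?_, by simpa [Fin.sum_univ_castSucc] using hwc⟩
    induction k using Fin.lastCases with
    | last => simpa using hw
    | cast k => simpa using hw' k

theorem exists_norm_eq_and_norm_sum_eq_iff (hE : 1 < Module.rank ℝ E) {m : ℕ} (r : Fin m → ℝ)
    (hr : ∀ k, 0 ≤ r k) {c : ℝ} (hc₀ : 0 ≤ c) :
    (∃ w : Fin m → E, (∀ k, ‖w k‖ = r k) ∧ ‖∑ k, w k‖ = c) ↔
      c ≤ ∑ k, r k ∧ ∀ k, 2 * r k ≤ c + ∑ j, r j := by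
  refine ⟨?_, fun h => exists_norm_eq_and_norm_sum_eq hE r hr hc₀ h.1 h.2⟩
  rintro ⟨w, hw, rfl⟩
  simp only [← hw]
  exact ⟨norm_sum_le _ _, fun k => two_mul_norm_le_norm_sum_add_sum_norm w (Finset.mem_univ k)⟩

end Polygon

open Real in
theorem convex_setOf_sum_exp_lt {ι E : Type*} [AddCommGroup E] [Module ℝ E]
    (s : Finset ι) (ℓ : ι → E →ₗ[ℝ] ℝ) (c : ℝ) : Convex ℝ {y | ∑ i ∈ s, rexp (ℓ i y) < c} := by
  classical
  have hconvex : ConvexOn ℝ Set.univ fun y => ∑ i ∈ s, rexp (ℓ i y) := by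
    induction s using Finset.induction with
    | empty => simpa using convexOn_const (0 : ℝ) convex_univ
    | insert i s hi ih =>
      simp only [Finset.sum_insert hi]
      exact (convexOn_exp.comp_linearMap (ℓ i)).add ih
  simpa using hconvex.convex_lt c

section LinearAmoeba

open Real

variable {n : ℕ}

def linearAmoeba (n : ℕ) : Set (Fin n → ℝ) :=
  {y | ∃ w : Fin n → ℂ, (∀ k, w k ≠ 0) ∧ 1 + ∑ k, w k = 0 ∧ ∀ k, y k = Real.log ‖w k‖}

theorem mem_linearAmoeba_iff {y : Fin n → ℝ} :
    y ∈ linearAmoeba n ↔ 1 ≤ ∑ k, rexp (y k) ∧ ∀ k, 2 * rexp (y k) ≤ 1 + ∑ j, rexp (y j) := by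
  rw [← exists_norm_eq_and_norm_sum_eq_iff (E := ℂ) (by rw [Complex.rank_real_complex]; norm_num)
    (fun k => rexp (y k)) (fun k => (exp_pos _).le) zero_le_one]
  constructor
  · rintro ⟨w, hw₀, hw, hy⟩
    refine ⟨w, fun k => by rw [hy k, exp_log (norm_pos_iff.mpr (hw₀ k))], ?_⟩
    rw [eq_neg_of_add_eq_zero_right hw, norm_neg, norm_one]
  · rintro ⟨w, hw, hsum⟩
    have hsum₀ : ∑ k, w k ≠ 0 := norm_ne_zero_iff.mp (by rw [hsum]; exact one_ne_zero)
    -- rotate the polygon so that its sides sum to `-1`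
    refine ⟨fun k => -(∑ j, w j)⁻¹ * w k, fun k => ?_, ?_, fun k => ?_⟩
    · have : w k ≠ 0 := norm_ne_zero_iff.mp (by rw [hw]; exact (exp_pos _).ne')
      simp [hsum₀, this]
    · rw [← Finset.mul_sum, neg_mul, inv_mul_cancel₀ hsum₀, add_neg_cancel]
    · simp [hsum, hw]

/-- The `n + 1` components of the complement of the amoeba of `1 + w₁ + ⋯ + wₙ`: on `none`
the constant term dominates, on `some k` the term `w_k` does. -/
def linearAmoebaComplComponent (n : ℕ) : Option (Fin n) → Set (Fin n → ℝ)
  | none => {y | ∑ k, rexp (y k) < 1}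
  | some k => {y | 1 + ∑ j, rexp (y j) < 2 * rexp (y k)}

theorem compl_linearAmoeba :
    (linearAmoeba n)ᶜ = ⋃ i, linearAmoebaComplComponent n i := by
  ext y
  simp only [Set.mem_compl_iff, mem_linearAmoeba_iff, Set.mem_iUnion, Option.exists,
    linearAmoebaComplComponent, Set.mem_ofPred_eq, not_and_or, not_le, not_forall]

theorem isOpen_linearAmoebaComplComponent (i : Option (Fin n)) :
    IsOpen (linearAmoebaComplComponent n i) := by
  cases i with
  | none => exact isOpen_lt (by fun_prop) continuous_const
  | some k => exact isOpen_lt (by fun_prop) (by fun_prop)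

theorem convex_linearAmoebaComplComponent (i : Option (Fin n)) :
    Convex ℝ (linearAmoebaComplComponent n i) := by
  let proj (k : Fin n) : (Fin n → ℝ) →ₗ[ℝ] ℝ := LinearMap.proj k
  cases i with
  | none => exact convex_setOf_sum_exp_lt Finset.univ proj 1
  | some k =>
    let ℓ (i : Option (Fin n)) : (Fin n → ℝ) →ₗ[ℝ] ℝ := i.elim (-proj k) (proj · - proj k)
    -- dividing by `e^{y_k}` turns the defining inequality into a convex one
    have hdiv : linearAmoebaComplComponent n (some k) =
        {y | ∑ i, rexp (ℓ i y) < 2} := by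
      ext y
      simp only [linearAmoebaComplComponent, Set.mem_ofPred_eq, Fintype.sum_option, ℓ, proj,
        Option.elim_none, Option.elim_some, LinearMap.neg_apply, LinearMap.sub_apply,
        LinearMap.coe_proj, Function.eval, Real.exp_neg, Real.exp_sub, ← Finset.sum_div]
      rw [inv_eq_one_div, ← add_div, div_lt_iff₀ (exp_pos _)]
    rw [hdiv]
    exact convex_setOf_sum_exp_lt Finset.univ ℓ 2

theorem nonempty_linearAmoebaComplComponent (i : Option (Fin n)) :
    (linearAmoebaComplComponent n i).Nonempty := by
  cases i with
  | none =>
    refine ⟨fun _ => Real.log (n + 1 : ℝ)⁻¹, ?_⟩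
    have hn : (0 : ℝ) < n + 1 := by positivity
    simp only [linearAmoebaComplComponent, Set.mem_ofPred_eq, exp_log (inv_pos.mpr hn),
      Finset.sum_const, Finset.card_univ, Fintype.card_fin, nsmul_eq_mul]
    rw [← div_eq_mul_inv, div_lt_one hn]
    linarith
  | some k =>
    refine ⟨Function.update 0 k (Real.log (n + 1)), ?_⟩
    have hn : (0 : ℝ) < n + 1 := by positivity
    have hcard : ((Finset.univ.erase k).card : ℝ) + 1 = n := by
      exact_mod_cast (Finset.card_erase_add_one (Finset.mem_univ k)).trans (Finset.card_fin n)
    simp only [linearAmoebaComplComponent, Set.mem_ofPred_eq,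
      ← Finset.add_sum_erase _ _ (Finset.mem_univ k)]
    rw [Finset.sum_congr rfl fun j hj => by rw [Function.update_of_ne (Finset.ne_of_mem_erase hj)]]
    simp only [Function.update_self, Pi.zero_apply, Real.exp_zero, Finset.sum_const, nsmul_eq_mul,
      mul_one, exp_log hn]
    linarith

theorem pairwise_disjoint_linearAmoebaComplComponent :
    Pairwise (Function.onFun Disjoint (linearAmoebaComplComponent n)) := by
  have hle (y : Fin n → ℝ) (k : Fin n) : rexp (y k) ≤ ∑ j, rexp (y j) :=
    Finset.single_le_sum (fun j _ => (exp_pos (y j)).le) (Finset.mem_univ k)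
  have hle₂ (y : Fin n → ℝ) {k l : Fin n} (hkl : k ≠ l) :
      rexp (y k) + rexp (y l) ≤ ∑ j, rexp (y j) := by
    rw [← Finset.sum_pair hkl (f := fun j => rexp (y j))]
    exact Finset.sum_le_sum_of_subset_of_nonneg (Finset.subset_univ _)
      fun j _ _ => (exp_pos (y j)).le
  refine fun i i' hii' => Set.disjoint_left.mpr fun y hy hy' => ?_
  match i, i' with
  | none, none => exact hii' rfl
  | none, some k | some k, none =>
    simp only [linearAmoebaComplComponent, Set.mem_ofPred_eq] at hy hy'
    linarith [hle y k]
  | some k, some l =>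
    simp only [linearAmoebaComplComponent, Set.mem_ofPred_eq] at hy hy'
    linarith [hle₂ y fun h : k = l => hii' (h ▸ rfl)]

end LinearAmoeba

theorem Matrix.isUnit_map_intCast {m K : Type*} [Fintype m] [DecidableEq m] [Field K]
    [CharZero K] {L : Matrix m m ℤ} (hL : L.det ≠ 0) : IsUnit (L.map (Int.cast : ℤ → K)) := by
  have hdet : (L.map (Int.cast : ℤ → K)).det = L.det := by
    simpa using ((Int.castRingHom K).map_det L).symm
  rw [Matrix.isUnit_iff_isUnit_det, hdet, isUnit_iff_ne_zero]
  exact_mod_cast hL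

section Monomial

variable {n : ℕ} {L : Matrix (Fin n) (Fin n) ℤ}

/-- Take `z = exp ζ` for a complex solution `ζ` of `L ζ = log v`; then `Re ζ = x`, as both
solve the same real linear system. -/
theorem exists_prod_zpow_eq (hL : L.det ≠ 0) (x : Fin n → ℝ) (v : Fin n → ℂ)
    (hxv : ∀ k, ∑ j, L k j * x j = Real.log ‖v k‖) (hv : ∀ k, v k ≠ 0) :
    ∃ z : Fin n → ℂ, (∀ j, z j ≠ 0) ∧ (∀ j, x j = Real.log ‖z j‖) ∧
      ∀ k, ∏ j, z j ^ L k j = v k := by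
  obtain ⟨ζ, hζ⟩ := Matrix.mulVec_surjective_iff_isUnit.mpr
    (Matrix.isUnit_map_intCast (K := ℂ) hL) fun k => Complex.log (v k)
  have hre : (fun j => (ζ j).re) = x := by
    refine Matrix.mulVec_injective_iff_isUnit.mpr (Matrix.isUnit_map_intCast (K := ℝ) hL) ?_
    ext k
    have := congrArg Complex.re (congrFun hζ k)
    simp only [Matrix.mulVec, dotProduct, Matrix.map_apply, re_sum, mul_re, intCast_re, intCast_im,
      zero_mul, sub_zero] at this ⊢
    rw [this, Complex.log_re, hxv]
  refine ⟨fun j => exp (ζ j), fun j => exp_ne_zero _, fun j => ?_, fun k => ?_⟩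
  · rw [Complex.norm_exp, Real.log_exp, ← hre]
  · simp_rw [← exp_int_mul, ← exp_sum]
    have := congrFun hζ k
    simp only [Matrix.mulVec, dotProduct, Matrix.map_apply] at this
    rw [this, exp_log (hv k)]

variable (L) in
/-- `x ↦ (log |a_k| + ⟨α_k, x⟩)ₖ`, the logarithms of the moduli of the monomials of `f` over a
point `z` with `Log z = x`. -/
noncomputable def monomialLogMap (a : Fin n → ℂ) : (Fin n → ℝ) →ᵃ[ℝ] (Fin n → ℝ) :=
  (Matrix.toLin' (L.map (Int.cast : ℤ → ℝ))).toAffineMap +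
    AffineMap.const ℝ (Fin n → ℝ) fun k => Real.log ‖a k‖

theorem monomialLogMap_apply (a : Fin n → ℂ) (x : Fin n → ℝ) (k : Fin n) :
    monomialLogMap L a x k = ∑ j, L k j * x j + Real.log ‖a k‖ := by
  simp [monomialLogMap, Matrix.mulVec, dotProduct]

theorem monomialLogMap_surjective (hL : L.det ≠ 0) (a : Fin n → ℂ) :
    Function.Surjective (monomialLogMap L a) := by
  intro y
  obtain ⟨x, hx⟩ := Matrix.mulVec_surjective_iff_isUnit.mpr
    (Matrix.isUnit_map_intCast (K := ℝ) hL) (y - fun k => Real.log ‖a k‖)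
  refine ⟨x, funext fun k => ?_⟩
  have := congrFun hx k
  simp only [Matrix.mulVec, dotProduct, Matrix.map_apply, Pi.sub_apply] at this
  rw [monomialLogMap_apply, this, sub_add_cancel]

theorem amoeba_eq_preimage_linearAmoeba (hL : L.det ≠ 0) {a : Fin n → ℂ} (ha : ∀ k, a k ≠ 0) :
    {x : Fin n → ℝ | ∃ z : Fin n → ℂ, (∀ j, z j ≠ 0) ∧ 1 + ∑ k, a k * ∏ j, z j ^ (L k j) = 0 ∧
      ∀ j, x j = Real.log ‖z j‖} = monomialLogMap L a ⁻¹' linearAmoeba n := by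
  ext x
  constructor
  · rintro ⟨z, hz, hf, hx⟩
    have hprod (k : Fin n) : ∏ j, z j ^ L k j ≠ 0 :=
      Finset.prod_ne_zero_iff.mpr fun j _ => zpow_ne_zero _ (hz j)
    refine ⟨fun k => a k * ∏ j, z j ^ L k j, fun k => mul_ne_zero (ha k) (hprod k), hf,
      fun k => ?_⟩
    rw [monomialLogMap_apply, norm_mul, Real.log_mul (norm_ne_zero_iff.mpr (ha k))
      (norm_ne_zero_iff.mpr (hprod k)), norm_prod, Real.log_prod, add_comm]
    · simp [hx, Real.log_zpow]
    · exact fun j _ => norm_ne_zero_iff.mpr (zpow_ne_zero _ (hz j))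
  · rintro ⟨w, hw, hsum, hlog⟩
    obtain ⟨z, hz, hx, hzw⟩ := exists_prod_zpow_eq hL x (fun k => w k / a k) (fun k => by
        rw [norm_div, Real.log_div (norm_ne_zero_iff.mpr (hw k)) (norm_ne_zero_iff.mpr (ha k)),
          ← hlog, monomialLogMap_apply, add_sub_cancel_right])
      fun k => div_ne_zero (hw k) (ha k)
    refine ⟨z, hz, ?_, hx⟩
    simp_rw [hzw, mul_div_cancel₀ _ (ha _), hsum]

end Monomial

/-- **Lemma 3.3(i)** (second part). For `f(z) = 1 + Σ_k a_k z^{α_k}` with invertible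
integer exponent matrix `L` (so the support of `f` is the vertex set of a simplex),
the amoeba of `V_f` is solid: its complement has exactly `n + 1` connected
components. -/
theorem amoeba_simplex_is_solid
    (n : ℕ) (L : Matrix (Fin n) (Fin n) ℤ) (hL : L.det ≠ 0)
    (a : Fin n → ℂ) (ha : ∀ k, a k ≠ 0)
    (amoebaf : Set (Fin n → ℝ))
    (hamoebaf : amoebaf = {x : Fin n → ℝ | ∃ z : Fin n → ℂ,
      (∀ j, z j ≠ 0) ∧ 1 + ∑ k, a k * ∏ j, z j ^ (L k j) = 0 ∧
      ∀ j, x j = Real.log ‖z j‖}) :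
    {C | ∃ x ∈ amoebafᶜ, C = connectedComponentIn amoebafᶜ x}.ncard = n + 1 := by
  set T := monomialLogMap L a
  have hcompl : amoebafᶜ = ⋃ i, T ⁻¹' linearAmoebaComplComponent n i := by
    rw [hamoebaf, amoeba_eq_preimage_linearAmoeba hL ha, ← Set.preimage_compl, compl_linearAmoeba,
      Set.preimage_iUnion]
  rw [hcompl, ncard_connectedComponentIn_iUnion, Nat.card_eq_fintype_card,
    Fintype.card_option, Fintype.card_fin]
  · exact fun i => (isOpen_linearAmoebaComplComponent i).preimage T.continuous_of_finiteDimensional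
  · exact fun i => ⟨(nonempty_linearAmoebaComplComponent i).preimage
      (monomialLogMap_surjective hL a),
      ((convex_linearAmoebaComplComponent i).affine_preimage T).isPreconnected⟩
  · exact fun i j hij => (pairwise_disjoint_linearAmoebaComplComponent hij).preimage T
end

section
/- Let L = (α_{kj})_{1≤k,j≤n} be an n×n integer matrix with det L ≠ 0, let a = (a₁,…,a_n) ∈ (ℂ*)ⁿ, and let f(z) = 1 + Σ_{k=1}^n a_k ∏_{j=1}^n z_j^{α_{kj}}. Then the lifted coamoeba of V_f is the affine preimage of the lifted coamoeba of the standard hyperplane P₁ = {w ∈ (ℂ*)ⁿ : 1 + w₁ + ⋯ + w_n = 0}: co𝒜_f = { x ∈ ℝⁿ : the vector with k-th coordinate Σ_{j=1}^n α_{kj} x_j + arg(a_k) lies in co𝒜_{P₁} }. (Lemma 3.3(ii).) -/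
open Complex

/-!
Write each coordinate as `z_j = exp (r_j + x_j I)`. Then the monomial `a_k z^{α_k}` equals
`exp ((log ‖a_k‖ + (L r)_k) + ((L x)_k + arg a_k) I)`: arguments are transformed by the affine map
`x ↦ L x + arg a` and log-moduli by `r ↦ L r + log ‖a‖`. This gives one inclusion at once; for
the other, `L` is invertible over `ℝ`, so `r` can be chosen to give the monomials any prescribed
moduli, in particular those of a given point `w ∈ P₁`.
-/

def IsArgLift (x : ℝ) (z : ℂ) : Prop := ∃ m : ℤ, x = z.arg + 2 * Real.pi * m

lemma isArgLift_im_exp (t : ℂ) : IsArgLift t.im (exp t) := by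
  obtain ⟨m, hm⟩ := exp_eq_exp_iff_exists_int.1 (exp_log (exp_ne_zero t))
  refine ⟨-m, ?_⟩
  have him := congrArg im hm
  simp only [log_im, add_im, mul_im, intCast_re, mul_re, re_ofNat, ofReal_re, im_ofNat, ofReal_im,
    mul_zero, sub_zero, I_im, mul_one, zero_mul, add_zero, I_re, intCast_im, sub_self] at him
  push_cast
  linarith

lemma isArgLift_iff_exists_exp {x : ℝ} {z : ℂ} (hz : z ≠ 0) :
    IsArgLift x z ↔ ∃ r : ℝ, exp (r + x * I) = z := by
  constructor
  · rintro ⟨m, rfl⟩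
    refine ⟨Real.log ‖z‖, ?_⟩
    have hexponent : (Real.log ‖z‖ : ℂ) + ↑(z.arg + 2 * Real.pi * m) * I
        = log z + m * (2 * Real.pi * I) := by
      apply Complex.ext <;> simp [log_re, log_im, mul_comm]
    rw [hexponent, exp_add, exp_log hz, exp_int_mul_two_pi_mul_I, mul_one]
  · rintro ⟨r, rfl⟩
    simpa using isArgLift_im_exp (r + x * I)

lemma exists_sum_intCast_mul_eq {ι K : Type*} [Fintype ι] [DecidableEq ι] [Field K] [CharZero K]
    {L : Matrix ι ι ℤ} (hL : L.det ≠ 0) (c : ι → K) :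
    ∃ r : ι → K, ∀ k, ∑ j, (L k j : K) * r j = c k := by
  have hunit : IsUnit (L.map ((↑) : ℤ → K)).det := by
    rw [← Int.cast_det]
    exact isUnit_iff_ne_zero.2 (Int.cast_ne_zero.2 hL)
  obtain ⟨r, hr⟩ :=
    Matrix.mulVec_surjective_iff_isUnit.2 ((Matrix.isUnit_iff_isUnit_det _).2 hunit) c
  exact ⟨r, fun k => congrFun hr k⟩

lemma mul_prod_exp_zpow {ι : Type*} [Fintype ι] {a : ℂ} (ha : a ≠ 0) (l : ι → ℤ) (r x : ι → ℝ) :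
    a * ∏ j, exp (r j + x j * I) ^ l j
      = exp ((Real.log ‖a‖ + ∑ j, l j * r j : ℝ) + ((∑ j, l j * x j) + a.arg : ℝ) * I) := by
  conv_lhs => rw [← exp_log ha]
  simp_rw [← exp_int_mul, ← exp_sum, ← exp_add]
  congr 1
  apply Complex.ext
  · simp [log_re]
  · simp [log_im]; ring

lemma isArgLift_mul_prod_zpow {ι : Type*} [Fintype ι] {a : ℂ} (ha : a ≠ 0) (l : ι → ℤ)
    {z : ι → ℂ} (hz : ∀ j, z j ≠ 0) {x : ι → ℝ} (hx : ∀ j, IsArgLift (x j) (z j)) :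
    IsArgLift ((∑ j, l j * x j) + a.arg) (a * ∏ j, z j ^ l j) := by
  choose r hr using fun j => (isArgLift_iff_exists_exp (hz j)).1 (hx j)
  obtain rfl : z = fun j => exp (r j + x j * I) := funext fun j => (hr j).symm
  rw [mul_prod_exp_zpow ha]
  convert isArgLift_im_exp _ using 1
  simp

lemma exists_mul_prod_zpow_eq {ι : Type*} [Fintype ι] [DecidableEq ι] {L : Matrix ι ι ℤ}
    (hL : L.det ≠ 0) {a w : ι → ℂ} (ha : ∀ k, a k ≠ 0) (hw : ∀ k, w k ≠ 0) (x : ι → ℝ)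
    (hy : ∀ k, IsArgLift ((∑ j, L k j * x j) + (a k).arg) (w k)) :
    ∃ z : ι → ℂ, (∀ j, z j ≠ 0) ∧ (∀ j, IsArgLift (x j) (z j)) ∧
      ∀ k, a k * ∏ j, z j ^ L k j = w k := by
  choose s hs using fun k => (isArgLift_iff_exists_exp (hw k)).1 (hy k)
  obtain ⟨r, hr⟩ := exists_sum_intCast_mul_eq hL fun k => s k - Real.log ‖a k‖
  refine ⟨fun j => exp (r j + x j * I), fun j => exp_ne_zero _,
    fun j => (isArgLift_iff_exists_exp (exp_ne_zero _)).2 ⟨r j, rfl⟩, fun k => ?_⟩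
  rw [mul_prod_exp_zpow (ha k), hr, add_sub_cancel, hs]

/-- **Lemma 3.3(ii)** (first part). For `f(z) = 1 + Σ_k a_k z^{α_k}` with invertible
integer exponent matrix `L`, the lifted coamoeba of `V_f` is the preimage of the
lifted coamoeba of the standard hyperplane `P₁` under the affine map
`x ↦ (Σ_j α_{kj} x_j + arg(a_k))_k`. -/
theorem coamoeba_simplex_eq_affine_preimage
    (n : ℕ) (L : Matrix (Fin n) (Fin n) ℤ) (hL : L.det ≠ 0)
    (a : Fin n → ℂ) (ha : ∀ k, a k ≠ 0)
    (coAmoebaf : Set (Fin n → ℝ))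
    (hcoAmoebaf : coAmoebaf = {x : Fin n → ℝ | ∃ z : Fin n → ℂ,
      (∀ j, z j ≠ 0) ∧ 1 + ∑ k, a k * ∏ j, z j ^ (L k j) = 0 ∧
      ∀ j, ∃ m : ℤ, x j = (z j).arg + 2 * Real.pi * m})
    (coAmoebaP1 : Set (Fin n → ℝ))
    (hcoAmoebaP1 : coAmoebaP1 = {y : Fin n → ℝ | ∃ w : Fin n → ℂ,
      (∀ k, w k ≠ 0) ∧ 1 + ∑ k, w k = 0 ∧
      ∀ k, ∃ m : ℤ, y k = (w k).arg + 2 * Real.pi * m}) :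
    coAmoebaf = {x : Fin n → ℝ |
      (fun k => (∑ j, (L k j : ℝ) * x j) + (a k).arg) ∈ coAmoebaP1} := by
  subst hcoAmoebaf hcoAmoebaP1
  ext x
  constructor
  · rintro ⟨z, hz, hf, hx⟩
    exact ⟨fun k => a k * ∏ j, z j ^ L k j,
      fun k => mul_ne_zero (ha k) (Finset.prod_ne_zero_iff.2 fun j _ => zpow_ne_zero _ (hz j)),
      hf, fun k => isArgLift_mul_prod_zpow (ha k) (L k) hz hx⟩
  · rintro ⟨w, hw, hP, hy⟩
    obtain ⟨z, hz, hx, hzw⟩ := exists_mul_prod_zpow_eq hL ha hw x hy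
    exact ⟨z, hz, by simpa only [hzw] using hP, hx⟩
end

section
/- Let N ≥ 2, let r₁,…,r_N ∈ ℂ \ {0} with 0 < |r₁| < |r₂| < ⋯ < |r_N|, and let f(z) = ∏_{j=1}^N (z − r_j). Fix an integer k with 0 < k < N, let 𝔸 = {z ∈ ℂ : |r_k| < |z| < |r_{k+1}|}, and let g be any holomorphic function on 𝔸 with exp(g(z)) = f(z)/z^k for all z ∈ 𝔸. Then for every ρ with |r_k| < ρ < |r_{k+1}|, the imaginary part of (1/(2πi)) ∮_{|z|=ρ} g(z) dz/z is congruent modulo 2π to (1 + (−1)^{N−k+1})·(π/2) + Σ_{j=k+1}^N arg(r_j), i.e. to Σ_{j=k+1}^N (π + arg(r_j)). (Example 5.5, formula (2).) -/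
/-!
On the circle `|z| = ρ` we have `f(z)/z^k = ∏_{j ≤ k} (1 - r_j/z) · ∏_{j > k} (-r_j)(1 - z/r_j)`,
and each factor `1 - w` has `|w| < 1`. Summing principal logarithms of the factors therefore gives a
continuous logarithm of `f/z^k` on the circle, and since the circle is connected, `g` differs from
it by a constant in `2πiℤ`. By the mean value property (after `z ↦ 1/z` for the factors
`1 - r_j/z`), every `log (1 - ·)` term has mean zero on the circle, so the mean of `g` is
`Σ_{j>k} log(-r_j)` modulo `2πi`; its imaginary part is `Σ_{j>k} arg(-r_j) ≡ Σ_{j>k} (π + arg r_j)`.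
-/

open Complex Metric
open Real (circleAverage circleAverage_congr_sphere)

theorem one_sub_mem_slitPlane {w : ℂ} (hw : ‖w‖ < 1) : 1 - w ∈ slitPlane := by
  simpa [sub_eq_add_neg] using mem_slitPlane_of_norm_lt_one (z := -w) (by simpa)

theorem differentiableAt_log_one_sub_div_const {a z : ℂ} (hz : ‖z‖ < ‖a‖) :
    DifferentiableAt ℂ (fun w ↦ log (1 - w / a)) z := by
  have ha : 0 < ‖a‖ := (norm_nonneg z).trans_lt hz
  refine (differentiableAt_log (one_sub_mem_slitPlane ?_)).comp z
    (f := fun w ↦ 1 - w / a) (by fun_prop)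
  rwa [norm_div, div_lt_one ha]

theorem differentiableAt_log_one_sub_const_div {a z : ℂ} (hz : ‖a‖ < ‖z‖) :
    DifferentiableAt ℂ (fun w ↦ log (1 - a / w)) z := by
  have hz0 : z ≠ 0 := norm_pos_iff.mp ((norm_nonneg a).trans_lt hz)
  refine (differentiableAt_log (one_sub_mem_slitPlane ?_)).comp z
    (f := fun w ↦ 1 - a / w) (by fun_prop)
  rwa [norm_div, div_lt_one (norm_pos_iff.mpr hz0)]

theorem circleAverage_comp_inv {E : Type*} [NormedAddCommGroup E] [NormedSpace ℝ E]
    (f : ℂ → E) (R : ℝ) :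
    circleAverage (fun z ↦ f z⁻¹) 0 R = circleAverage f 0 R⁻¹ := by
  rw [Real.circleAverage_eq_circleAverage_zero_one,
    Real.circleAverage_eq_circleAverage_zero_one (R := R⁻¹),
    ← Real.circleAverage_zero_one_congr_inv]
  simp [mul_comm]

theorem circleAverage_log_one_sub_div_const {a : ℂ} {R : ℝ} (h : |R| < ‖a‖) :
    circleAverage (fun z ↦ log (1 - z / a)) 0 R = 0 := by
  have hd : DifferentiableOn ℂ (fun z ↦ log (1 - z / a)) (closedBall 0 |R|) := fun z hz ↦
    (differentiableAt_log_one_sub_div_const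
      ((mem_closedBall_zero_iff.mp hz).trans_lt h)).differentiableWithinAt
  rw [(hd.mono closure_ball_subset_closedBall).diffContOnCl.circleAverage]
  simp

theorem circleAverage_log_one_sub_const_div {a : ℂ} {R : ℝ} (h : ‖a‖ < |R|) :
    circleAverage (fun z ↦ log (1 - a / z)) 0 R = 0 := by
  rcases eq_or_ne a 0 with rfl | ha
  · simpa using Real.circleAverage_const (0 : ℂ) 0 R
  have hinv : (fun z : ℂ ↦ log (1 - a / z)) = fun z ↦ log (1 - z⁻¹ / a⁻¹) := by
    simp only [div_inv_eq_mul, inv_mul_eq_div]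
  rw [hinv, circleAverage_comp_inv (fun w ↦ log (1 - w / a⁻¹))]
  refine circleAverage_log_one_sub_div_const ?_
  rwa [abs_inv, norm_inv, inv_lt_inv₀ ((norm_nonneg a).trans_lt h) (norm_pos_iff.mpr ha)]

theorem IsPreconnected.exists_int_eqOn_add_of_exp_eqOn {S : Set ℂ} (hS : IsPreconnected S)
    {f g : ℂ → ℂ} (hf : ContinuousOn f S) (hg : ContinuousOn g S)
    (h : ∀ z ∈ S, exp (f z) = exp (g z)) :
    ∃ n : ℤ, ∀ z ∈ S, f z = g z + n * (2 * Real.pi * I) := by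
  have hmaps : Set.MapsTo (f - g) S (AddSubgroup.zmultiples (2 * Real.pi * I)) := fun z hz ↦ by
    obtain ⟨n, hn⟩ := exp_eq_exp_iff_exists_int.mp (h z hz)
    exact AddSubgroup.mem_zmultiples_iff.mpr ⟨n, by simp [hn, zsmul_eq_mul]⟩
  obtain ⟨c, hc, hfg⟩ := hS.eqOn_const_of_mapsTo
    (isDiscrete_iff_discreteTopology.mpr (NormedSpace.discreteTopology_zmultiples _))
    (hf.sub hg) hmaps ⟨0, zero_mem _⟩
  obtain ⟨n, rfl⟩ := AddSubgroup.mem_zmultiples_iff.mp hc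
  refine ⟨n, fun z hz ↦ ?_⟩
  have := hfg hz
  simp only [Pi.sub_apply, Function.const_apply, zsmul_eq_mul] at this
  rw [← this]
  ring

theorem prod_sub_mul_prod_sub_div_pow {K ι : Type*} [Field K] (s t : Finset ι) (r : ι → K)
    {z : K} (hz : z ≠ 0) (hr : ∀ j ∈ t, r j ≠ 0) :
    (∏ j ∈ s, (z - r j)) * (∏ j ∈ t, (z - r j)) / z ^ s.card =
      (∏ j ∈ s, (1 - r j / z)) * ∏ j ∈ t, (-r j * (1 - z / r j)) := by
  have hs : ∏ j ∈ s, (1 - r j / z) = (∏ j ∈ s, (z - r j)) / z ^ s.card := by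
    simp only [one_sub_div hz, Finset.prod_div_distrib, Finset.prod_const]
  have ht : ∀ j ∈ t, -r j * (1 - z / r j) = z - r j := fun j hj ↦ by
    field_simp [hr j hj]
    ring
  rw [hs, Finset.prod_congr rfl ht]
  ring

theorem exists_arg_neg_eq {x : ℂ} (hx : x ≠ 0) :
    ∃ m : ℤ, arg (-x) = Real.pi + arg x + 2 * Real.pi * m := by
  have h : ((arg (-x) : ℝ) : Real.Angle) = ((Real.pi + arg x : ℝ) : Real.Angle) := by
    rw [arg_neg_coe_angle hx, Real.Angle.coe_add, add_comm]
  obtain ⟨m, hm⟩ := (Real.Angle.angle_eq_iff_two_pi_dvd_sub).mp h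
  exact ⟨m, by linarith⟩

theorem exists_im_sum_log_neg_eq {ι : Type*} {t : Finset ι} {r : ι → ℂ}
    (hr : ∀ j ∈ t, r j ≠ 0) :
    ∃ m : ℤ, (∑ j ∈ t, log (-r j)).im = ∑ j ∈ t, (Real.pi + arg (r j)) + 2 * Real.pi * m := by
  choose! m hm using fun j hj ↦ exists_arg_neg_eq (hr j hj)
  refine ⟨∑ j ∈ t, m j, ?_⟩
  simp only [im_sum, log_im]
  rw [Finset.sum_congr rfl hm, Finset.sum_add_distrib, Int.cast_sum, Finset.mul_sum]

/-- For `‖r j‖ < ‖z‖` (`j ∈ s`) and `‖z‖ < ‖r j‖` (`j ∈ t`) the arguments `1 - r j / z` and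
`1 - z / r j` lie in the half-plane `re > 0`, so near such `z` this is a holomorphic branch of
`log ((∏ j ∈ s, (z - r j)) * (∏ j ∈ t, (z - r j)) / z ^ #s)`. -/
noncomputable def annulusLog {ι : Type*} (s t : Finset ι) (r : ι → ℂ) (z : ℂ) : ℂ :=
  ∑ j ∈ s, log (1 - r j / z) + ∑ j ∈ t, (log (-r j) + log (1 - z / r j))

section annulusLog

variable {ι : Type*} {s t : Finset ι} {r : ι → ℂ}

theorem differentiableAt_annulusLog {z : ℂ} (hs : ∀ j ∈ s, ‖r j‖ < ‖z‖)
    (ht : ∀ j ∈ t, ‖z‖ < ‖r j‖) : DifferentiableAt ℂ (annulusLog s t r) z :=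
  (DifferentiableAt.fun_sum fun j hj ↦ differentiableAt_log_one_sub_const_div (hs j hj)).add
    (DifferentiableAt.fun_sum fun j hj ↦
      (differentiableAt_const _).add (differentiableAt_log_one_sub_div_const (ht j hj)))

theorem exp_annulusLog {z : ℂ} (hz : z ≠ 0) (hs : ∀ j ∈ s, ‖r j‖ < ‖z‖)
    (ht : ∀ j ∈ t, ‖z‖ < ‖r j‖) :
    exp (annulusLog s t r z) = (∏ j ∈ s, (z - r j)) * (∏ j ∈ t, (z - r j)) / z ^ s.card := by
  have hr : ∀ j ∈ t, r j ≠ 0 := fun j hj ↦ norm_pos_iff.mp ((norm_nonneg z).trans_lt (ht j hj))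
  rw [prod_sub_mul_prod_sub_div_pow s t r hz hr, annulusLog, exp_add, exp_sum, exp_sum]
  congr 1
  · refine Finset.prod_congr rfl fun j hj ↦ exp_log (slitPlane_ne_zero (one_sub_mem_slitPlane ?_))
    rw [norm_div, div_lt_one (norm_pos_iff.mpr hz)]
    exact hs j hj
  · refine Finset.prod_congr rfl fun j hj ↦ ?_
    rw [exp_add, exp_log (neg_ne_zero.mpr (hr j hj)),
      exp_log (slitPlane_ne_zero (one_sub_mem_slitPlane ?_))]
    rw [norm_div, div_lt_one (norm_pos_iff.mpr (hr j hj))]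
    exact ht j hj

theorem circleAverage_annulusLog {R : ℝ} (hs : ∀ j ∈ s, ‖r j‖ < |R|)
    (ht : ∀ j ∈ t, |R| < ‖r j‖) :
    circleAverage (annulusLog s t r) 0 R = ∑ j ∈ t, log (-r j) := by
  have hint {f : ℂ → ℂ} (hf : ∀ z : ℂ, ‖z‖ = |R| → DifferentiableAt ℂ f z) :
      CircleIntegrable f 0 R :=
    ContinuousOn.circleIntegrable' fun z hz ↦
      (hf z (mem_sphere_zero_iff_norm.mp hz)).continuousAt.continuousWithinAt
  have hds : ∀ j ∈ s, ∀ z : ℂ, ‖z‖ = |R| → DifferentiableAt ℂ (fun z ↦ log (1 - r j / z)) z :=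
    fun j hj z hz ↦ differentiableAt_log_one_sub_const_div (hz ▸ hs j hj)
  have hdt : ∀ j ∈ t, ∀ z : ℂ, ‖z‖ = |R| →
      DifferentiableAt ℂ (fun z ↦ log (-r j) + log (1 - z / r j)) z :=
    fun j hj z hz ↦
      (differentiableAt_const _).add (differentiableAt_log_one_sub_div_const (hz ▸ ht j hj))
  unfold annulusLog
  rw [Real.circleAverage_fun_add (hint fun z hz ↦ .fun_sum fun j hj ↦ hds j hj z hz)
      (hint fun z hz ↦ .fun_sum fun j hj ↦ hdt j hj z hz),
    Real.circleAverage_fun_sum fun j hj ↦ hint (hds j hj),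
    Real.circleAverage_fun_sum fun j hj ↦ hint (hdt j hj),
    Finset.sum_eq_zero fun j hj ↦ circleAverage_log_one_sub_const_div (hs j hj), zero_add]
  refine Finset.sum_congr rfl fun j hj ↦ ?_
  rw [Real.circleAverage_fun_add (circleIntegrable_const _ _ _)
      (hint fun z hz ↦ differentiableAt_log_one_sub_div_const (hz ▸ ht j hj)),
    Real.circleAverage_const, circleAverage_log_one_sub_div_const (ht j hj), add_zero]

end annulusLog

theorem exists_circleAverage_eq_of_exp_eq_prod {ι : Type*} {s t : Finset ι} {r : ι → ℂ} {R : ℝ}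
    (hR : 0 < R) (hs : ∀ j ∈ s, ‖r j‖ < R) (ht : ∀ j ∈ t, R < ‖r j‖) {g : ℂ → ℂ}
    (hg : ContinuousOn g (sphere 0 R))
    (hexp : ∀ z ∈ sphere 0 R,
      exp (g z) = (∏ j ∈ s, (z - r j)) * (∏ j ∈ t, (z - r j)) / z ^ s.card) :
    ∃ n : ℤ, circleAverage g 0 R = ∑ j ∈ t, log (-r j) + n * (2 * Real.pi * I) := by
  have hnorm : ∀ z ∈ sphere (0 : ℂ) R, ‖z‖ = R := fun z ↦ mem_sphere_zero_iff_norm.mp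
  have hs' : ∀ z ∈ sphere (0 : ℂ) R, ∀ j ∈ s, ‖r j‖ < ‖z‖ := fun z hz j hj ↦ hnorm z hz ▸ hs j hj
  have ht' : ∀ z ∈ sphere (0 : ℂ) R, ∀ j ∈ t, ‖z‖ < ‖r j‖ := fun z hz j hj ↦ hnorm z hz ▸ ht j hj
  have hcont : ContinuousOn (annulusLog s t r) (sphere 0 R) := fun z hz ↦
    (differentiableAt_annulusLog (hs' z hz) (ht' z hz)).continuousAt.continuousWithinAt
  have hconn : IsPreconnected (sphere (0 : ℂ) R) :=
    (isConnected_sphere (by simp [rank_real_complex]) 0 hR.le).isPreconnected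
  obtain ⟨n, hn⟩ := hconn.exists_int_eqOn_add_of_exp_eqOn hg hcont fun z hz ↦ by
    rw [hexp z hz, exp_annulusLog (ne_zero_of_mem_sphere hR.ne' ⟨z, hz⟩) (hs' z hz) (ht' z hz)]
  have hRabs : |R| = R := abs_of_pos hR
  refine ⟨n, ?_⟩
  rw [circleAverage_congr_sphere (hRabs ▸ hn), Real.circleAverage_fun_add
      (hcont.circleIntegrable hR.le) (circleIntegrable_const _ _ _),
    circleAverage_annulusLog (by rwa [hRabs]) (by rwa [hRabs]), Real.circleAverage_const]

theorem prod_Icc_one_mul_prod_Icc_succ {M : Type*} [CommMonoid M] (f : ℕ → M) {k N : ℕ}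
    (hkN : k ≤ N) :
    (∏ j ∈ Finset.Icc 1 k, f j) * ∏ j ∈ Finset.Icc (k + 1) N, f j = ∏ j ∈ Finset.Icc 1 N, f j := by
  simpa only [← Finset.Icc_add_one_left_eq_Ioc, zero_add] using
    Finset.prod_Ioc_consecutive f (Nat.zero_le k) hkN

theorem forall_Icc_lt_and_forall_Icc_gt {α : Type*} [Preorder α] {a : ℕ → α} {N k : ℕ}
    (ha : ∀ j, 1 ≤ j → j < N → a j < a (j + 1)) (hkN : k < N) {ρ : α} (hρ1 : a k < ρ)
    (hρ2 : ρ < a (k + 1)) :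
    (∀ j ∈ Finset.Icc 1 k, a j < ρ) ∧ ∀ j ∈ Finset.Icc (k + 1) N, ρ < a j := by
  have hmono : MonotoneOn a (Set.Icc 1 N) :=
    monotoneOn_of_le_add_one Set.ordConnected_Icc fun j _ hj hj1 ↦ (ha j hj.1 hj1.2).le
  constructor
  · intro j hj
    obtain ⟨h1, h2⟩ := Finset.mem_Icc.mp hj
    exact (hmono ⟨h1, by omega⟩ ⟨by omega, hkN.le⟩ h2).trans_lt hρ1
  · intro j hj
    obtain ⟨h1, h2⟩ := Finset.mem_Icc.mp hj
    exact hρ2.trans_le (hmono ⟨by omega, hkN⟩ ⟨by omega, h2⟩ h1)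

theorem imaginary_part_of_log_mean_on_annulus_general
    (N : ℕ) (r : ℕ → ℂ)
    (hrlt : ∀ j, 1 ≤ j → j < N → ‖r j‖ < ‖r (j + 1)‖)
    (k : ℕ) (hkN : k < N)
    (g : ℂ → ℂ)
    (hg : DifferentiableOn ℂ g
      {z : ℂ | ‖r k‖ < ‖z‖ ∧ ‖z‖ < ‖r (k + 1)‖})
    (hgexp : ∀ z ∈ {z : ℂ | ‖r k‖ < ‖z‖ ∧
        ‖z‖ < ‖r (k + 1)‖},
      Complex.exp (g z) = (∏ j ∈ Finset.Icc 1 N, (z - r j)) / z ^ k)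
    (ρ : ℝ) (hρ1 : ‖r k‖ < ρ) (hρ2 : ρ < ‖r (k + 1)‖) :
    ∃ m : ℤ,
      ((1 / (2 * (Real.pi : ℂ) * Complex.I)) * (∮ z in C(0, ρ), g z / z)).im
        = (∑ j ∈ Finset.Icc (k + 1) N, (Real.pi + (r j).arg)) + 2 * Real.pi * m := by
  have hρ : 0 < ρ := (norm_nonneg _).trans_lt hρ1
  obtain ⟨hs, ht⟩ := forall_Icc_lt_and_forall_Icc_gt (a := fun j ↦ ‖r j‖) hrlt hkN hρ1 hρ2
  have hsphere : sphere (0 : ℂ) ρ ⊆ {z | ‖r k‖ < ‖z‖ ∧ ‖z‖ < ‖r (k + 1)‖} := fun z hz ↦ by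
    rw [Set.mem_ofPred_eq, mem_sphere_zero_iff_norm.mp hz]
    exact ⟨hρ1, hρ2⟩
  obtain ⟨n, hn⟩ := exists_circleAverage_eq_of_exp_eq_prod hρ hs ht
    (hg.continuousOn.mono hsphere) fun z hz ↦ by
      rw [hgexp z (hsphere hz), prod_Icc_one_mul_prod_Icc_succ _ hkN.le, Nat.card_Icc,
        Nat.add_sub_cancel]
  obtain ⟨m, hm⟩ := exists_im_sum_log_neg_eq fun j hj ↦ norm_pos_iff.mp (hρ.trans (ht j hj))
  refine ⟨m + n, ?_⟩
  have hmean : 1 / (2 * (Real.pi : ℂ) * I) * (∮ z in C(0, ρ), g z / z) = circleAverage g 0 ρ := by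
    rw [Real.circleAverage_eq_circleIntegral hρ.ne']
    simp [div_eq_inv_mul]
  have him : ((n : ℂ) * (2 * Real.pi * I)).im = 2 * Real.pi * n := by
    simp [mul_comm]
  rw [hmean, hn, add_im, hm, him]
  push_cast
  ring

/-- **Example 5.5, formula (2).** Let `f(z) = ∏_{j=1}^N (z − r_j)` with
`0 < |r₁| < ⋯ < |r_N|`, let `0 < k < N`, and let `g` be a holomorphic logarithm of
`f(z)/z^k` on the annulus `|r_k| < |z| < |r_{k+1}|`. Then for every radius `ρ` in
this range, the imaginary part of `(1/(2πi)) ∮_{|z|=ρ} g(z) dz/z` is congruent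
modulo `2π` to `Σ_{j=k+1}^N (π + arg(r_j))`. -/
theorem imaginary_part_of_log_mean_on_annulus
    (N : ℕ) (hN : 2 ≤ N) (r : ℕ → ℂ)
    (hr0 : 0 < ‖r 1‖)
    (hrne : ∀ j, 1 ≤ j → j ≤ N → r j ≠ 0)
    (hrlt : ∀ j, 1 ≤ j → j < N → ‖r j‖ < ‖r (j + 1)‖)
    (k : ℕ) (hk0 : 0 < k) (hkN : k < N)
    (g : ℂ → ℂ)
    (hg : DifferentiableOn ℂ g
      {z : ℂ | ‖r k‖ < ‖z‖ ∧ ‖z‖ < ‖r (k + 1)‖})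
    (hgexp : ∀ z ∈ {z : ℂ | ‖r k‖ < ‖z‖ ∧
        ‖z‖ < ‖r (k + 1)‖},
      Complex.exp (g z) = (∏ j ∈ Finset.Icc 1 N, (z - r j)) / z ^ k)
    (ρ : ℝ) (hρ1 : ‖r k‖ < ρ) (hρ2 : ρ < ‖r (k + 1)‖) :
    ∃ m : ℤ,
      ((1 / (2 * (Real.pi : ℂ) * Complex.I)) * (∮ z in C(0, ρ), g z / z)).im
        = (∑ j ∈ Finset.Icc (k + 1) N, (Real.pi + (r j).arg)) + 2 * Real.pi * m :=
  imaginary_part_of_log_mean_on_annulus_general N r hrlt k hkN g hg hgexp ρ hρ1 hρ2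
end
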